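/- For all s ≥ 0, 8·P_{s+2}·P_s = P_{2s+1} + P_{2s+3} - 6·(-1)^s. -/
import Mathlib


def pell : ℕ → ℤ
  | 0 => 0
  | 1 => 1
  | n + 2 => 2 * pell (n + 1) + pell n

def hpell : ℕ → ℤ
  | 0 => 1
  | 1 => 1
  | n + 2 => 2 * hpell (n + 1) + hpell n

lemma pell_cassini (n : ℕ) :
    pell (n + 2) * pell n - pell (n + 1) ^ 2 = (-1 : ℤ) ^ (n + 1) := by
  induction n with
  | zero => simp [pell]
  | succ k ih =>
    have h : pell (k + 3) = 2 * pell (k + 2) + pell (k + 1) := rfl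
    have r : pell (k + 2) = 2 * pell (k + 1) + pell k := rfl
    rw [h, pow_succ]
    linear_combination (-1 : ℤ) * ih - pell (k + 2) * r

lemma pell_double (n : ℕ) :
    pell (2 * n) = 2 * pell n * (pell (n + 1) - pell n) ∧
      pell (2 * n + 1) = pell (n + 1) ^ 2 + pell n ^ 2 := by
  induction n with
  | zero => simp [pell]
  | succ k ih =>
    obtain ⟨h1, h2⟩ := ih
    have e1 : 2 * (k + 1) = 2 * k + 1 + 1 := by ring
    have e2 : 2 * (k + 1) + 1 = 2 * k + 1 + 2 := by ring
    have r1 : pell (2 * k + 1 + 1) = 2 * pell (2 * k + 1) + pell (2 * k) := by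
      have : 2 * k + 1 + 1 = 2 * k + 2 := rfl
      rw [this]; rfl
    have r2 : pell (2 * k + 1 + 2) = 2 * pell (2 * k + 1 + 1) + pell (2 * k + 1) := rfl
    have r3 : pell (k + 2) = 2 * pell (k + 1) + pell k := rfl
    constructor
    · rw [e1, r1, h1, h2, r3]; ring
    · rw [e2, r2, r1, h1, h2, r3]; ring

theorem eight_pell_mul (s : ℕ) :
    8 * pell (s + 2) * pell s = pell (2 * s + 1) + pell (2 * s + 3) - 6 * (-1 : ℤ) ^ s := by
  have h1 := (pell_double s).2
  have h2 := (pell_double (s + 1)).2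
  have e : 2 * (s + 1) + 1 = 2 * s + 3 := by ring
  rw [e] at h2
  have e2 : s + 1 + 1 = s + 2 := rfl
  rw [e2] at h2
  have r3 : pell (s + 2) = 2 * pell (s + 1) + pell s := rfl
  have hc := pell_cassini s
  rw [h1, h2, r3]
  rw [pow_succ] at hc
  linear_combination (6 : ℤ) * hc - 6 * pell s * r3
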